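/- arXiv:2206.07482 — 3 statements merged into one kernel-verified Lean document; each statement's English description precedes it below -/
import Mathlib

section
/- (Kantorovich-type bound) One exact steepest descent step satisfies ‖x₁ − s‖²_A ≤ ((κ − 1)/(κ + 1))² ‖x₀ − s‖²_A, where κ = λmax/λmin is the condition number of A. -/
/-!
Write `e = x₀ - s`, so that `r₀ = -A e`. Exact line search along `r₀` lowers the energy
`‖e‖²_A` by exactly `(r₀ᵀr₀)² / (r₀ᵀAr₀)`. Every eigenvalue `λ` of `A` satisfies
`λ (λ - λmin) (λmax - λ) ≥ 0`, so `A (A - λmin) (λmax - A)` is positive semidefinite; evaluated at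
`e` this is `r₀ᵀAr₀ + λmin λmax ‖e‖²_A ≤ (λmin + λmax) r₀ᵀr₀`. By AM-GM the energy decrease is then
at least `4 λmin λmax / (λmin + λmax)²` times `‖e‖²_A`, and
`1 - 4 λmin λmax / (λmin + λmax)² = ((κ - 1) / (κ + 1))²`.
-/

open Matrix
open scoped MatrixOrder ComplexOrder

theorem sub_sq_div_le_of_add_mul_le {m M u v w : ℝ} (hm : 0 < m) (hM : 0 < M) (hu : 0 < u)
    (hv : 0 ≤ v) (h : u + m * M * v ≤ (m + M) * w) :
    v - w ^ 2 / u ≤ ((M - m) / (M + m)) ^ 2 * v := by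
  have hmMv : 0 ≤ m * M * v := by positivity
  have hamgm : 4 * (m * M) * v * u ≤ ((m + M) * w) ^ 2 := by
    nlinarith [sq_nonneg (u - m * M * v), pow_le_pow_left₀ (by positivity) h 2]
  have hdecrease : 4 * (m * M) * v / (m + M) ^ 2 ≤ w ^ 2 / u := by
    rw [div_le_div_iff₀ (by positivity) hu]
    linarith
  calc v - w ^ 2 / u ≤ v - 4 * (m * M) * v / (m + M) ^ 2 := by linarith
    _ = ((M - m) / (M + m)) ^ 2 * v := by
      field_simp
      ring

section
variable {n : Type*} [Fintype n]

theorem Matrix.IsSymm.dotProduct_mulVec_comm {R : Type*} [CommSemiring R] {A : Matrix n n R}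
    (hA : A.IsSymm) (x y : n → R) : x ⬝ᵥ (A *ᵥ y) = y ⬝ᵥ (A *ᵥ x) := by
  rw [dotProduct_mulVec, ← mulVec_transpose, hA.eq, dotProduct_comm]

-- If `rᵀAr = 0`, the step length is `x / 0 = 0` and both sides are `eᵀAe`.
theorem Matrix.IsSymm.energy_add_smul_of_mulVec_eq_neg {K : Type*} [Field K] {A : Matrix n n K}
    (hA : A.IsSymm) {e r : n → K} (hr : A *ᵥ e = -r) :
    (e + ((r ⬝ᵥ r) / (r ⬝ᵥ (A *ᵥ r))) • r) ⬝ᵥ (A *ᵥ (e + ((r ⬝ᵥ r) / (r ⬝ᵥ (A *ᵥ r))) • r))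
      = e ⬝ᵥ (A *ᵥ e) - (r ⬝ᵥ r) ^ 2 / (r ⬝ᵥ (A *ᵥ r)) := by
  have her : e ⬝ᵥ (A *ᵥ r) = -(r ⬝ᵥ r) := by rw [hA.dotProduct_mulVec_comm, hr, dotProduct_neg]
  have hre : r ⬝ᵥ (A *ᵥ e) = -(r ⬝ᵥ r) := by rw [hr, dotProduct_neg]
  simp only [mulVec_add, mulVec_smul, add_dotProduct, dotProduct_add, smul_dotProduct,
    dotProduct_smul, smul_eq_mul, her, hre]
  rcases eq_or_ne (r ⬝ᵥ (A *ᵥ r)) 0 with h | h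
  · simp [h]
  · field_simp
    ring

variable [DecidableEq n]

theorem Matrix.PosDef.pos_of_mem_spectrum {𝕜 : Type*} [RCLike 𝕜] {A : Matrix n n 𝕜}
    (hA : A.PosDef) {μ : ℝ} (hμ : μ ∈ spectrum ℝ A) : 0 < μ := by
  obtain ⟨i, rfl⟩ := hA.isHermitian.spectrum_real_eq_range_eigenvalues ▸ hμ
  exact hA.eigenvalues_pos i

theorem Matrix.IsHermitian.posSemidef_mul_sub_mul_sub {𝕜 : Type*} [RCLike 𝕜] {A : Matrix n n 𝕜}
    (hA : A.IsHermitian) {m M : ℝ} (hm : 0 ≤ m) (hspec : spectrum ℝ A ⊆ Set.Icc m M) :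
    (A * (A - m • 1) * (M • 1 - A)).PosSemidef := by
  have ha : IsSelfAdjoint A := hA
  have hcfc : cfc (fun x : ℝ => x * (x - m) * (M - x)) A = A * (A - m • 1) * (M • 1 - A) := by
    rw [cfc_mul (fun x => x * (x - m)) (fun x => M - x) A, cfc_mul (fun x => x) (fun x => x - m) A,
      cfc_sub (fun x => x) (fun _ => m) A, cfc_sub (fun _ => M) (fun x => x) A, cfc_id' ℝ A,
      cfc_const m A, cfc_const M A, Algebra.algebraMap_eq_smul_one, Algebra.algebraMap_eq_smul_one]
  rw [← nonneg_iff_posSemidef, ← hcfc]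
  refine cfc_nonneg fun x hx => ?_
  obtain ⟨hmx, hxM⟩ := hspec hx
  have : 0 ≤ x - m := sub_nonneg.2 hmx
  have : 0 ≤ M - x := sub_nonneg.2 hxM
  have : 0 ≤ x := hm.trans hmx
  positivity

theorem Matrix.IsHermitian.kantorovich {A : Matrix n n ℝ} (hA : A.IsHermitian)
    {m M : ℝ} (hm : 0 ≤ m) (hspec : spectrum ℝ A ⊆ Set.Icc m M) (x : n → ℝ) :
    (A *ᵥ x) ⬝ᵥ (A *ᵥ (A *ᵥ x)) + m * M * (x ⬝ᵥ (A *ᵥ x))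
      ≤ (m + M) * ((A *ᵥ x) ⬝ᵥ (A *ᵥ x)) := by
  have h := (hA.posSemidef_mul_sub_mul_sub hm hspec).dotProduct_mulVec_nonneg x
  have hx : ∀ y, x ⬝ᵥ (A *ᵥ y) = (A *ᵥ x) ⬝ᵥ y := fun y => by
    rw [(isHermitian_iff_isSymm.1 hA).dotProduct_mulVec_comm, dotProduct_comm]
  simp only [star_trivial, ← mulVec_mulVec, sub_mulVec, mulVec_sub, smul_mulVec, mulVec_smul,
    one_mulVec, dotProduct_sub, dotProduct_smul, smul_eq_mul, hx] at h
  rw [dotProduct_comm (A *ᵥ x) x] at h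
  linarith

end

theorem kantorovich_sd_bound_general {N : ℕ} (A : Matrix (Fin N) (Fin N) ℝ)
    (hApd : A.PosDef) (lammin lammax : ℝ)
    (hmin_eig : Module.End.HasEigenvalue (Matrix.toLin' A) lammin)
    (hmin_le : ∀ μ : ℝ, Module.End.HasEigenvalue (Matrix.toLin' A) μ → lammin ≤ μ)
    (hmax_ge : ∀ μ : ℝ, Module.End.HasEigenvalue (Matrix.toLin' A) μ → μ ≤ lammax)
    (b x₀ : Fin N → ℝ) (hr : b - A *ᵥ x₀ ≠ 0) :
    let κ : ℝ := lammax / lammin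
    let s : Fin N → ℝ := A⁻¹ *ᵥ b
    let r₀ : Fin N → ℝ := b - A *ᵥ x₀
    let x₁ : Fin N → ℝ := x₀ + ((r₀ ⬝ᵥ r₀) / (r₀ ⬝ᵥ (A *ᵥ r₀))) • r₀
    (x₁ - s) ⬝ᵥ (A *ᵥ (x₁ - s)) ≤ ((κ - 1) / (κ + 1)) ^ 2 * ((x₀ - s) ⬝ᵥ (A *ᵥ (x₀ - s))) := by
  intro κ s r₀ x₁
  have heig : ∀ μ, Module.End.HasEigenvalue (toLin' A) μ ↔ μ ∈ spectrum ℝ A := fun μ => by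
    rw [Module.End.hasEigenvalue_iff_mem_spectrum, spectrum_toLin']
  have hspec : spectrum ℝ A ⊆ Set.Icc lammin lammax := fun μ hμ =>
    ⟨hmin_le μ ((heig μ).2 hμ), hmax_ge μ ((heig μ).2 hμ)⟩
  have hm : 0 < lammin := hApd.pos_of_mem_spectrum ((heig lammin).1 hmin_eig)
  have hM : 0 < lammax := hm.trans_le (hmax_ge _ hmin_eig)
  have hκ : (κ - 1) / (κ + 1) = (lammax - lammin) / (lammax + lammin) := by
    simp only [κ]
    field_simp
  have hAe : A *ᵥ (x₀ - s) = -r₀ := by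
    rw [mulVec_sub, mulVec_mulVec, mul_nonsing_inv _ ((isUnit_iff_isUnit_det A).1 hApd.isUnit),
      one_mulVec, neg_sub]
  have hx₁ : x₁ - s = x₀ - s + ((r₀ ⬝ᵥ r₀) / (r₀ ⬝ᵥ (A *ᵥ r₀))) • r₀ := add_sub_right_comm _ _ _
  rw [hx₁, (isHermitian_iff_isSymm.1 hApd.isHermitian).energy_add_smul_of_mulVec_eq_neg hAe, hκ]
  have hK := hApd.isHermitian.kantorovich hm.le hspec (x₀ - s)
  set v := (x₀ - s) ⬝ᵥ (A *ᵥ (x₀ - s))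
  simp only [hAe, mulVec_neg, neg_dotProduct, dotProduct_neg, neg_neg] at hK
  have hu : 0 < r₀ ⬝ᵥ (A *ᵥ r₀) := by
    simpa only [star_trivial] using hApd.dotProduct_mulVec_pos hr
  have hv : 0 ≤ v := by
    simpa only [star_trivial] using hApd.posSemidef.dotProduct_mulVec_nonneg (x₀ - s)
  exact sub_sq_div_le_of_add_mul_le hm hM hu hv (by linarith)

theorem kantorovich_sd_bound {N : ℕ} (A : Matrix (Fin N) (Fin N) ℝ)
    (hA : A.IsSymm) (hApd : A.PosDef) (lammin lammax : ℝ)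
    (hmin_eig : Module.End.HasEigenvalue (Matrix.toLin' A) lammin)
    (hmax_eig : Module.End.HasEigenvalue (Matrix.toLin' A) lammax)
    (hmin_le : ∀ μ : ℝ, Module.End.HasEigenvalue (Matrix.toLin' A) μ → lammin ≤ μ)
    (hmax_ge : ∀ μ : ℝ, Module.End.HasEigenvalue (Matrix.toLin' A) μ → μ ≤ lammax)
    (b x₀ : Fin N → ℝ) (hr : b - A *ᵥ x₀ ≠ 0) :
    let κ : ℝ := lammax / lammin
    let s : Fin N → ℝ := A⁻¹ *ᵥ b
    let r₀ : Fin N → ℝ := b - A *ᵥ x₀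
    let x₁ : Fin N → ℝ := x₀ + ((r₀ ⬝ᵥ r₀) / (r₀ ⬝ᵥ (A *ᵥ r₀))) • r₀
    (x₁ - s) ⬝ᵥ (A *ᵥ (x₁ - s)) ≤ ((κ - 1) / (κ + 1)) ^ 2 * ((x₀ - s) ⬝ᵥ (A *ᵥ (x₀ - s))) :=
  kantorovich_sd_bound_general A hApd lammin lammax hmin_eig hmin_le hmax_ge b x₀ hr
end

section
/- (Kantorovich inequality) For A symmetric positive definite with extremal eigenvalues λmin, λmax and any unit vector u, (uᵀAu)(uᵀA⁻¹u) ≤ (λmin + λmax)²/(4 λmin λmax). -/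
open Matrix

/-! For an eigenvalue `t ∈ [m, M]`, `(t - m) (M - t) ≥ 0` reads `t + m M t⁻¹ ≤ m + M`. Diagonalising
`A` in an orthonormal eigenbasis turns this into `uᵀAu + m M uᵀA⁻¹u ≤ m + M` for a unit vector `u`,
and AM-GM, `4 (m M) a b ≤ (a + m M b)²`, bounds the product `a b` of the two quadratic forms. -/

theorem add_mul_inv_le_add_of_mem_Icc {m M t : ℝ} (hm : 0 < m) (ht : t ∈ Set.Icc m M) :
    t + m * M * t⁻¹ ≤ m + M := by
  have ht0 : 0 < t := hm.trans_le ht.1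
  rw [← sub_nonneg]
  have key : m + M - (t + m * M * t⁻¹) = (t - m) * (M - t) / t := by field_simp; ring
  rw [key]
  exact div_nonneg (mul_nonneg (sub_nonneg.2 ht.1) (sub_nonneg.2 ht.2)) ht0.le

theorem mul_le_sq_div_four_mul_of_add_mul_le {a b c s : ℝ} (ha : 0 ≤ a) (hb : 0 ≤ b) (hc : 0 < c)
    (h : a + c * b ≤ s) : a * b ≤ s ^ 2 / (4 * c) := by
  rw [le_div_iff₀ (by positivity)]
  calc a * b * (4 * c) = 4 * a * (c * b) := by ring
    _ ≤ (a + c * b) ^ 2 := four_mul_le_sq_add a (c * b)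
    _ ≤ s ^ 2 := by gcongr

theorem Matrix.dotProduct_mulVec_mul_diagonal_mul_transpose {n R : Type*} [Fintype n]
    [DecidableEq n] [CommSemiring R] (U : Matrix n n R) (d u : n → R) :
    u ⬝ᵥ ((U * diagonal d * Uᵀ) *ᵥ u) = ∑ i, d i * (Uᵀ *ᵥ u) i ^ 2 := by
  rw [← mulVec_mulVec, ← mulVec_mulVec, dotProduct_mulVec, ← mulVec_transpose]
  simp only [dotProduct, mulVec_diagonal]
  exact Finset.sum_congr rfl fun i _ => by ring

namespace Matrix.IsHermitian

variable {n : Type*} [Fintype n] [DecidableEq n] {A : Matrix n n ℝ} (hA : A.IsHermitian)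

theorem eq_mul_diagonal_mul_transpose :
    A = (hA.eigenvectorUnitary : Matrix n n ℝ) * diagonal hA.eigenvalues *
      (hA.eigenvectorUnitary : Matrix n n ℝ)ᵀ := by
  conv_lhs => rw [hA.spectral_theorem]
  simp [star_eq_conjTranspose]

theorem hasEigenvalue_toLin'_iff {μ : ℝ} :
    Module.End.HasEigenvalue (toLin' A) μ ↔ μ ∈ Set.range hA.eigenvalues := by
  rw [Module.End.hasEigenvalue_iff_mem_spectrum, spectrum_toLin',
    hA.spectrum_real_eq_range_eigenvalues]

theorem eigenvectorUnitary_mul_transpose :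
    (hA.eigenvectorUnitary : Matrix n n ℝ) * (hA.eigenvectorUnitary : Matrix n n ℝ)ᵀ = 1 := by
  simpa [star_eq_conjTranspose] using Unitary.coe_mul_star_self hA.eigenvectorUnitary

theorem transpose_mul_eigenvectorUnitary :
    (hA.eigenvectorUnitary : Matrix n n ℝ)ᵀ * (hA.eigenvectorUnitary : Matrix n n ℝ) = 1 := by
  simpa [star_eq_conjTranspose] using Unitary.coe_star_mul_self hA.eigenvectorUnitary

theorem inv_eq_mul_diagonal_inv_mul_transpose (h0 : ∀ i, hA.eigenvalues i ≠ 0) :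
    A⁻¹ = (hA.eigenvectorUnitary : Matrix n n ℝ) * diagonal hA.eigenvalues⁻¹ *
      (hA.eigenvectorUnitary : Matrix n n ℝ)ᵀ := by
  set U : Matrix n n ℝ := ↑hA.eigenvectorUnitary
  have hdd : diagonal hA.eigenvalues * diagonal hA.eigenvalues⁻¹ = 1 := by
    rw [diagonal_mul_diagonal, ← diagonal_one]
    exact congrArg diagonal (funext fun i => mul_inv_cancel₀ (h0 i))
  apply inv_eq_right_inv
  calc A * (U * diagonal hA.eigenvalues⁻¹ * Uᵀ)
      = U * diagonal hA.eigenvalues * Uᵀ * (U * diagonal hA.eigenvalues⁻¹ * Uᵀ) :=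
        congrArg (· * _) hA.eq_mul_diagonal_mul_transpose
    _ = U * (diagonal hA.eigenvalues * (Uᵀ * U) * diagonal hA.eigenvalues⁻¹) * Uᵀ := by
        simp only [Matrix.mul_assoc]
    _ = U * Uᵀ := by rw [hA.transpose_mul_eigenvectorUnitary, Matrix.mul_one, hdd, Matrix.mul_one]
    _ = 1 := hA.eigenvectorUnitary_mul_transpose

theorem dotProduct_mulVec_add_mul_dotProduct_inv_mulVec_le {m M : ℝ} (hm : 0 < m)
    (hspec : ∀ i, hA.eigenvalues i ∈ Set.Icc m M) (u : n → ℝ) :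
    u ⬝ᵥ (A *ᵥ u) + m * M * (u ⬝ᵥ (A⁻¹ *ᵥ u)) ≤ (m + M) * (u ⬝ᵥ u) := by
  set U : Matrix n n ℝ := ↑hA.eigenvectorUnitary
  set w := Uᵀ *ᵥ u
  have hAu : u ⬝ᵥ (A *ᵥ u) = ∑ i, hA.eigenvalues i * w i ^ 2 :=
    (congrArg (fun B => u ⬝ᵥ (B *ᵥ u)) hA.eq_mul_diagonal_mul_transpose).trans
      (dotProduct_mulVec_mul_diagonal_mul_transpose U _ u)
  have hAinvu : u ⬝ᵥ (A⁻¹ *ᵥ u) = ∑ i, (hA.eigenvalues i)⁻¹ * w i ^ 2 := by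
    rw [hA.inv_eq_mul_diagonal_inv_mul_transpose fun i => (hm.trans_le (hspec i).1).ne']
    exact dotProduct_mulVec_mul_diagonal_mul_transpose U _ u
  have huu : u ⬝ᵥ u = ∑ i, w i ^ 2 := by
    simpa [diagonal_one, U, hA.eigenvectorUnitary_mul_transpose] using
      dotProduct_mulVec_mul_diagonal_mul_transpose U 1 u
  rw [hAu, hAinvu, huu, Finset.mul_sum, Finset.mul_sum, ← Finset.sum_add_distrib]
  gcongr with i
  calc hA.eigenvalues i * w i ^ 2 + m * M * ((hA.eigenvalues i)⁻¹ * w i ^ 2)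
      = (hA.eigenvalues i + m * M * (hA.eigenvalues i)⁻¹) * w i ^ 2 := by ring
    _ ≤ (m + M) * w i ^ 2 :=
      mul_le_mul_of_nonneg_right (add_mul_inv_le_add_of_mem_Icc hm (hspec i)) (sq_nonneg _)

theorem kantorovich_s13 {m M : ℝ} (hm : 0 < m) (hmM : m ≤ M)
    (hspec : ∀ i, hA.eigenvalues i ∈ Set.Icc m M) (u : n → ℝ) (hu : u ⬝ᵥ u = 1) :
    (u ⬝ᵥ (A *ᵥ u)) * (u ⬝ᵥ (A⁻¹ *ᵥ u)) ≤ (m + M) ^ 2 / (4 * m * M) := by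
  have hPD : A.PosDef := hA.posDef_iff_eigenvalues_pos.mpr fun i => hm.trans_le (hspec i).1
  rw [mul_assoc]
  apply mul_le_sq_div_four_mul_of_add_mul_le ?_ ?_ (mul_pos hm (hm.trans_le hmM))
  · simpa [hu] using hA.dotProduct_mulVec_add_mul_dotProduct_inv_mulVec_le hm hspec u
  · simpa using hPD.posSemidef.dotProduct_mulVec_nonneg u
  · simpa using hPD.inv.posSemidef.dotProduct_mulVec_nonneg u

end Matrix.IsHermitian

theorem kantorovich_inequality_general {N : ℕ} (A : Matrix (Fin N) (Fin N) ℝ)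
    (hApd : A.PosDef) (lammin lammax : ℝ)
    (hmin_eig : Module.End.HasEigenvalue (Matrix.toLin' A) lammin)
    (hmin_le : ∀ μ : ℝ, Module.End.HasEigenvalue (Matrix.toLin' A) μ → lammin ≤ μ)
    (hmax_ge : ∀ μ : ℝ, Module.End.HasEigenvalue (Matrix.toLin' A) μ → μ ≤ lammax)
    (u : Fin N → ℝ) (hu : u ⬝ᵥ u = 1) :
    (u ⬝ᵥ (A *ᵥ u)) * (u ⬝ᵥ (A⁻¹ *ᵥ u)) ≤ (lammin + lammax) ^ 2 / (4 * lammin * lammax) := by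
  have hA := hApd.isHermitian
  have hasEigenvalue_eigenvalues (i : Fin N) :
      Module.End.HasEigenvalue (toLin' A) (hA.eigenvalues i) :=
    hA.hasEigenvalue_toLin'_iff.mpr ⟨i, rfl⟩
  have hmin_pos : 0 < lammin := by
    obtain ⟨i, rfl⟩ := hA.hasEigenvalue_toLin'_iff.mp hmin_eig
    exact hApd.eigenvalues_pos i
  exact hA.kantorovich_s13 hmin_pos (hmax_ge _ hmin_eig)
    (fun i => ⟨hmin_le _ (hasEigenvalue_eigenvalues i), hmax_ge _ (hasEigenvalue_eigenvalues i)⟩)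
    u hu

theorem kantorovich_inequality {N : ℕ} (A : Matrix (Fin N) (Fin N) ℝ)
    (hA : A.IsSymm) (hApd : A.PosDef) (lammin lammax : ℝ)
    (hmin_eig : Module.End.HasEigenvalue (Matrix.toLin' A) lammin)
    (hmax_eig : Module.End.HasEigenvalue (Matrix.toLin' A) lammax)
    (hmin_le : ∀ μ : ℝ, Module.End.HasEigenvalue (Matrix.toLin' A) μ → lammin ≤ μ)
    (hmax_ge : ∀ μ : ℝ, Module.End.HasEigenvalue (Matrix.toLin' A) μ → μ ≤ lammax)
    (u : Fin N → ℝ) (hu : u ⬝ᵥ u = 1) :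
    (u ⬝ᵥ (A *ᵥ u)) * (u ⬝ᵥ (A⁻¹ *ᵥ u)) ≤ (lammin + lammax) ^ 2 / (4 * lammin * lammax) :=
  kantorovich_inequality_general A hApd lammin lammax hmin_eig hmin_le hmax_ge u hu
end

section
/- If the error e = x − s is a linear combination of two eigenvectors of A with equal coefficient contributions, steepest descent residuals alternate between two fixed directions: e_{k+2} is a scalar multiple of e_k. -/
/-!
Exact line search makes consecutive residuals `rₖ = A eₖ` orthogonal. The span of `v₁, v₂` is
`A`-invariant, so every residual lies in one plane; there `rₖ` and `rₖ₊₂` are both orthogonal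
to `rₖ₊₁`, hence proportional, and injectivity of `A` transfers this to the errors.
-/

open Matrix Module Submodule

variable {K n : Type*} [Field K] [Fintype n]

def steepestDescentStep (A : Matrix n n K) (e : n → K) : n → K :=
  e - (((A *ᵥ e) ⬝ᵥ (A *ᵥ e)) / ((A *ᵥ e) ⬝ᵥ (A *ᵥ (A *ᵥ e)))) • (A *ᵥ e)

theorem steepestDescentStep_of_mulVec_eq_zero {A : Matrix n n K} {e : n → K}
    (h : A *ᵥ e = 0) : steepestDescentStep A e = e := by
  simp [steepestDescentStep, h]

theorem mulVec_steepestDescentStep_dotProduct_mulVec {A : Matrix n n K} {e : n → K}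
    (h : (A *ᵥ e) ⬝ᵥ (A *ᵥ (A *ᵥ e)) ≠ 0) :
    (A *ᵥ steepestDescentStep A e) ⬝ᵥ (A *ᵥ e) = 0 := by
  rw [steepestDescentStep, mulVec_sub, mulVec_smul, sub_dotProduct, smul_dotProduct,
    dotProduct_comm (A *ᵥ (A *ᵥ e)), smul_eq_mul, div_mul_cancel₀ _ h, sub_self]

theorem steepestDescentStep_mem {A : Matrix n n K} {p : Submodule K (n → K)}
    (hp : ∀ x ∈ p, A *ᵥ x ∈ p) {e : n → K} (he : e ∈ p) : steepestDescentStep A e ∈ p :=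
  p.sub_mem he (p.smul_mem _ (hp e he))

theorem mulVec_mem_span_of_forall_eigen {A : Matrix n n K} {S : Set (n → K)}
    (hS : ∀ v ∈ S, ∃ μ : K, A *ᵥ v = μ • v) {x : n → K} (hx : x ∈ span K S) :
    A *ᵥ x ∈ span K S := by
  induction hx using Submodule.span_induction with
  | mem v hv =>
    obtain ⟨μ, hμ⟩ := hS v hv
    rw [hμ]
    exact smul_mem _ μ (subset_span hv)
  | zero => simp
  | add x y _ _ hx hy => rw [mulVec_add]; exact add_mem hx hy
  | smul a x _ hx => rw [mulVec_smul]; exact smul_mem _ a hx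

section Ordered

variable [LinearOrder K] [IsStrictOrderedRing K]

theorem linearIndependent_pair_of_dotProduct_eq_zero {x y : n → K} (hx : x ≠ 0) (hy : y ≠ 0)
    (hxy : x ⬝ᵥ y = 0) : LinearIndependent K ![x, y] := by
  rw [LinearIndependent.pair_iff]
  intro s t hst
  have hs : s * (x ⬝ᵥ x) = 0 := by
    simpa [add_dotProduct, dotProduct_comm y x, hxy] using congrArg (· ⬝ᵥ x) hst
  have ht : t * (y ⬝ᵥ y) = 0 := by
    simpa [add_dotProduct, hxy] using congrArg (· ⬝ᵥ y) hst
  exact ⟨(mul_eq_zero.1 hs).resolve_right (dotProduct_self_eq_zero.not.2 hx),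
    (mul_eq_zero.1 ht).resolve_right (dotProduct_self_eq_zero.not.2 hy)⟩

theorem exists_eq_smul_of_dotProduct_eq_zero {W : Submodule K (n → K)} (hW : finrank K W ≤ 2)
    {x y z : n → K} (hx : x ∈ W) (hy : y ∈ W) (hz : z ∈ W) (hx0 : x ≠ 0) (hy0 : y ≠ 0)
    (hxy : x ⬝ᵥ y = 0) (hzy : z ⬝ᵥ y = 0) : ∃ c : K, z = c • x := by
  have hspan : span K {x, y} = W := by
    have hrank := finrank_span_eq_card (linearIndependent_pair_of_dotProduct_eq_zero hx0 hy0 hxy)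
    rw [Matrix.range_cons, Matrix.range_cons, Matrix.range_empty, Set.union_empty,
      Set.singleton_union] at hrank
    refine eq_of_le_of_finrank_le (span_le.2 (Set.pair_subset hx hy)) ?_
    rwa [hrank, Fintype.card_fin]
  obtain ⟨s, t, rfl⟩ := mem_span_pair.1 (hspan ▸ hz)
  have ht : t * (y ⬝ᵥ y) = 0 := by simpa [add_dotProduct, hxy] using hzy
  rw [(mul_eq_zero.1 ht).resolve_right (dotProduct_self_eq_zero.not.2 hy0), zero_smul, add_zero]
  exact ⟨s, rfl⟩

end Ordered

theorem sd_two_eigenvector_error_periodic_general {N : ℕ} (A : Matrix (Fin N) (Fin N) ℝ)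
    (hApd : A.PosDef) (v₁ v₂ : Fin N → ℝ) (lam₁ lam₂ : ℝ)
    (hv₁ : A *ᵥ v₁ = lam₁ • v₁) (hv₂ : A *ᵥ v₂ = lam₂ • v₂)
    (c₁ c₂ : ℝ)
    (e : ℕ → (Fin N → ℝ))
    (he0 : e 0 = c₁ • v₁ + c₂ • v₂)
    (hrec : ∀ k : ℕ,
      e (k + 1) = e k -
        (((A *ᵥ e k) ⬝ᵥ (A *ᵥ e k)) / ((A *ᵥ e k) ⬝ᵥ (A *ᵥ (A *ᵥ e k)))) • (A *ᵥ e k)) :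
    ∀ k : ℕ, ∃ c : ℝ, e (k + 2) = c • e k := by
  have hstep : ∀ k, e (k + 1) = steepestDescentStep A (e k) := hrec
  set W := span ℝ {v₁, v₂}
  have hAW : ∀ x ∈ W, A *ᵥ x ∈ W := fun x =>
    mulVec_mem_span_of_forall_eigen (by rintro v (rfl | rfl); exacts [⟨_, hv₁⟩, ⟨_, hv₂⟩])
  have heW : ∀ k, e k ∈ W := fun k => by
    induction k with
    | zero => exact he0 ▸ mem_span_pair.2 ⟨c₁, c₂, rfl⟩
    | succ k hk => exact hstep k ▸ steepestDescentStep_mem hAW hk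
  have hWdim : finrank ℝ W ≤ 2 := (finrank_span_le_card _).trans <| by
    rw [Set.toFinset_insert, Set.toFinset_singleton]
    exact Finset.card_le_two
  have hinj := mulVec_injective_iff_isUnit.2 hApd.isUnit
  have hden : ∀ k, A *ᵥ e k ≠ 0 → (A *ᵥ e k) ⬝ᵥ (A *ᵥ (A *ᵥ e k)) ≠ 0 := fun k h =>
    (hApd.dotProduct_mulVec_pos h).ne'
  intro k
  by_cases hr₁ : A *ᵥ e (k + 1) = 0
  · have he1 : e (k + 1) = 0 := hinj (by rw [hr₁, mulVec_zero])
    exact ⟨0, by rw [hstep, steepestDescentStep_of_mulVec_eq_zero hr₁, he1, zero_smul]⟩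
  have hr₀ : A *ᵥ e k ≠ 0 := fun h =>
    hr₁ (by rw [hstep, steepestDescentStep_of_mulVec_eq_zero h, h])
  obtain ⟨c, hc⟩ := exists_eq_smul_of_dotProduct_eq_zero hWdim (hAW _ (heW k))
    (hAW _ (heW (k + 1))) (hAW _ (heW (k + 2))) hr₀ hr₁
    (by
      rw [dotProduct_comm, hstep]
      exact mulVec_steepestDescentStep_dotProduct_mulVec (hden k hr₀))
    (by
      rw [hstep (k + 1)]
      exact mulVec_steepestDescentStep_dotProduct_mulVec (hden _ hr₁))
  exact ⟨c, hinj (by rw [hc, mulVec_smul])⟩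

theorem sd_two_eigenvector_error_periodic {N : ℕ} (A : Matrix (Fin N) (Fin N) ℝ)
    (hA : A.IsSymm) (hApd : A.PosDef) (v₁ v₂ : Fin N → ℝ) (lam₁ lam₂ : ℝ)
    (hv₁ : A *ᵥ v₁ = lam₁ • v₁) (hv₂ : A *ᵥ v₂ = lam₂ • v₂)
    (hlam : lam₁ ≠ lam₂)
    (hn₁ : v₁ ⬝ᵥ v₁ = 1) (hn₂ : v₂ ⬝ᵥ v₂ = 1) (horth : v₁ ⬝ᵥ v₂ = 0)
    (c₁ c₂ : ℝ) (hc₁ : c₁ ≠ 0) (hc₂ : c₂ ≠ 0)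
    (e : ℕ → (Fin N → ℝ))
    (he0 : e 0 = c₁ • v₁ + c₂ • v₂)
    (hrec : ∀ k : ℕ,
      e (k + 1) = e k -
        (((A *ᵥ e k) ⬝ᵥ (A *ᵥ e k)) / ((A *ᵥ e k) ⬝ᵥ (A *ᵥ (A *ᵥ e k)))) • (A *ᵥ e k)) :
    ∀ k : ℕ, ∃ c : ℝ, e (k + 2) = c • e k :=
  sd_two_eigenvector_error_periodic_general A hApd v₁ v₂ lam₁ lam₂ hv₁ hv₂ c₁ c₂ e he0 hrec
end
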